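/- Integral identity for even powers of the generalized sine (core of the recursion proposition): let m ≥ 1 be an integer and s a generalized sine function of order m, and define η(x) := x − s(x)·s'(x). Then η is differentiable with η'(x) = (m+1)·s(x)^{2m} for all x, and hence for all real a ≤ b one has ∫_a^b s(u)^{2m} du = (η(b) − η(a))/(m+1). -/

import Mathlib

/-- A generalized sine function of order `m ≥ 1`: a twice continuously differentiable
function `s : ℝ → ℝ` with `s'' = -m * s^(2m-1)`, `s 0 = 0` and `s' 0 = 1`. -/
def IsGenSine (m : ℕ) (s : ℝ → ℝ) : Prop :=
  ContDiff ℝ 2 s ∧ (∀ x : ℝ, deriv (deriv s) x = -(m : ℝ) * s x ^ (2 * m - 1)) ∧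
    s 0 = 0 ∧ deriv s 0 = 1

/-- with `η(x) = x - s(x)s'(x)` one has `η' = (m+1) s^(2m)` and hence
`∫_a^b s(u)^(2m) du = (η(b) - η(a))/(m+1)` for `a ≤ b`. -/
theorem generalized_sine_power_integral (m : ℕ) (hm : 1 ≤ m) (s : ℝ → ℝ)
    (hs : IsGenSine m s) :
    (∀ x : ℝ, HasDerivAt (fun y => y - s y * deriv s y) (((m:ℝ) + 1) * s x ^ (2 * m)) x) ∧
    ∀ a b : ℝ, a ≤ b →
      (∫ u in a..b, s u ^ (2 * m)) =
        ((b - s b * deriv s b) - (a - s a * deriv s a)) / ((m:ℝ) + 1) := by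
  obtain ⟨hC2, hODE, hs0, hs'0⟩ := hs
  have hds : Differentiable ℝ s := hC2.differentiable (by norm_num)
  have hC1' : ContDiff ℝ 1 (deriv s) := (contDiff_succ_iff_deriv.mp (by exact_mod_cast hC2 : ContDiff ℝ (1+1 : ℕ) s)).2.2
  have hds' : Differentiable ℝ (deriv s) := hC1'.differentiable (by norm_num)
  have hsd : ∀ x, HasDerivAt s (deriv s x) x := fun x => (hds x).hasDerivAt
  have hsd' : ∀ x, HasDerivAt (deriv s) (-(m : ℝ) * s x ^ (2 * m - 1)) x := fun x => by
    simpa [hODE x] using (hds' x).hasDerivAt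
  -- energy
  set E : ℝ → ℝ := fun x => deriv s x ^ 2 + s x ^ (2 * m) with hE
  have hEderiv : ∀ x, HasDerivAt E 0 x := by
    intro x
    have h1 : HasDerivAt (fun y => deriv s y ^ 2)
        (2 * deriv s x ^ 1 * (-(m : ℝ) * s x ^ (2 * m - 1))) x := by
      simpa using (hsd' x).fun_pow 2
    have h2 : HasDerivAt (fun y => s y ^ (2 * m))
        ((2 * m : ℕ) * s x ^ (2 * m - 1) * deriv s x) x := by
      simpa using (hsd x).fun_pow (2 * m)
    have := h1.fun_add h2
    refine this.congr_deriv ?_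
    push_cast
    ring
  have hEconst : ∀ x, E x = 1 := by
    intro x
    have hx : E x = E 0 :=
      is_const_of_deriv_eq_zero (fun y => ((hEderiv y).differentiableAt))
        (fun y => (hEderiv y).deriv) x 0
    rw [hx]
    have hm0 : m ≠ 0 := by omega
    simp [hE, hs0, hs'0, hm0]
  have heta : ∀ x : ℝ, HasDerivAt (fun y => y - s y * deriv s y)
      (((m:ℝ) + 1) * s x ^ (2 * m)) x := by
    intro x
    have h := (hasDerivAt_id' x).fun_sub ((hsd x).fun_mul (hsd' x))
    refine h.congr_deriv ?_
    have hEx := hEconst x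
    simp only [hE] at hEx
    have hpow : s x * s x ^ (2 * m - 1) = s x ^ (2 * m) := by
      rw [← pow_succ']
      congr 1
      omega
    nlinarith [hEx, hpow]
  refine ⟨heta, fun a b hab => ?_⟩
  have hcont : Continuous (fun u => ((m:ℝ) + 1) * s u ^ (2 * m)) :=
    continuous_const.mul (hds.continuous.pow _)
  have hint : (∫ u in a..b, ((m:ℝ) + 1) * s u ^ (2 * m)) =
      (b - s b * deriv s b) - (a - s a * deriv s a) :=
    intervalIntegral.integral_eq_sub_of_hasDerivAt (fun x _ => heta x)
      (hcont.intervalIntegrable a b)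
  have hm1 : ((m:ℝ) + 1) ≠ 0 := by positivity
  rw [intervalIntegral.integral_const_mul] at hint
  field_simp
  linarith [hint]
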